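/- Let · be a cycle set operation on A with automorphism α_A (a bijection of A with α_A(a·a') = α_A(a)·α_A(a')), and ⋆ a cycle set operation on B with automorphism α_B. Define an operation ∘ on the disjoint union A ⊔ B by: a ∘ a' = a·a' for a, a' ∈ A; a ∘ b = α_B(b) for a ∈ A, b ∈ B; b ∘ a = α_A(a) for b ∈ B, a ∈ A; b ∘ b' = b⋆b' for b, b' ∈ B. Then ∘ is a cycle set operation on A ⊔ B; moreover, if · and ⋆ are nondegenerate then ∘ is nondegenerate. -/

import Mathlib

def IsCycleSet {X : Type*} (op : X → X → X) : Prop :=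
  (∀ x, Function.Bijective fun y => op x y) ∧
  ∀ x y z, op (op x y) (op x z) = op (op y x) (op y z)

def IsNondegenerate {X : Type*} (op : X → X → X) : Prop :=
  Function.Bijective fun x => op x x

/-- Glueing two cycle sets along automorphisms:
`a ∘ a' = a·a'`, `a ∘ b = α_B b`, `b ∘ a = α_A a`, `b ∘ b' = b⋆b'`. -/
def glueOp {A B : Type*} (opA : A → A → A) (opB : B → B → B)
    (αA : Equiv.Perm A) (αB : Equiv.Perm B) : A ⊕ B → A ⊕ B → A ⊕ B
  | Sum.inl a, Sum.inl a' => Sum.inl (opA a a')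
  | Sum.inl _, Sum.inr b => Sum.inr (αB b)
  | Sum.inr _, Sum.inl a => Sum.inl (αA a)
  | Sum.inr b, Sum.inr b' => Sum.inr (opB b b')

/-!
Left translations of the glued operation are `Sum.map` of a left translation of one piece and
the automorphism of the other, and its squaring map is `Sum.map` of the two squaring maps, so
bijectivity transfers. In the cycle identity, the pure cases are those of the pieces, and in the
mixed cases both sides reduce to an automorphism applied to a product, or to the product of the
images, which agree because the automorphisms preserve the operations.
-/

section Glue

variable {A B : Type*} (opA : A → A → A) (opB : B → B → B) (αA : Equiv.Perm A)
  (αB : Equiv.Perm B)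

theorem glueOp_inl (a : A) : glueOp opA opB αA αB (Sum.inl a) = Sum.map (opA a) αB := by
  funext y; cases y <;> rfl

theorem glueOp_inr (b : B) : glueOp opA opB αA αB (Sum.inr b) = Sum.map αA (opB b) := by
  funext y; cases y <;> rfl

theorem glueOp_self :
    (fun x => glueOp opA opB αA αB x x) = Sum.map (fun a => opA a a) (fun b => opB b b) := by
  funext x; cases x <;> rfl

theorem glueOp_bijective {opA opB} (hA : ∀ a, Function.Bijective (opA a))
    (hB : ∀ b, Function.Bijective (opB b)) (x : A ⊕ B) :
    Function.Bijective (glueOp opA opB αA αB x) := by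
  rcases x with a | b
  · rw [glueOp_inl]; exact (hA a).sumMap αB.bijective
  · rw [glueOp_inr]; exact αA.bijective.sumMap (hB b)

theorem glueOp_cycle_identity {opA opB αA αB}
    (hA : ∀ x y z, opA (opA x y) (opA x z) = opA (opA y x) (opA y z))
    (hB : ∀ x y z, opB (opB x y) (opB x z) = opB (opB y x) (opB y z))
    (hαA : ∀ a a', αA (opA a a') = opA (αA a) (αA a'))
    (hαB : ∀ b b', αB (opB b b') = opB (αB b) (αB b')) (x y z : A ⊕ B) :
    glueOp opA opB αA αB (glueOp opA opB αA αB x y) (glueOp opA opB αA αB x z) =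
      glueOp opA opB αA αB (glueOp opA opB αA αB y x) (glueOp opA opB αA αB y z) := by
  rcases x with a | b <;> rcases y with a' | b' <;> rcases z with a'' | b'' <;>
    simp [glueOp, hA, hB, hαA, hαB]

theorem IsNondegenerate.glueOp {opA opB} (hA : IsNondegenerate opA) (hB : IsNondegenerate opB) :
    IsNondegenerate (glueOp opA opB αA αB) := by
  rw [IsNondegenerate, glueOp_self]
  exact hA.sumMap hB

end Glue

/-- The glueing of two cycle sets along automorphisms is a cycle set; it is
nondegenerate if both pieces are. -/
theorem glueOp_is_cycle_set {A B : Type*} (opA : A → A → A) (opB : B → B → B)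
    (hA : IsCycleSet opA) (hB : IsCycleSet opB)
    (αA : Equiv.Perm A) (hαA : ∀ a a', αA (opA a a') = opA (αA a) (αA a'))
    (αB : Equiv.Perm B) (hαB : ∀ b b', αB (opB b b') = opB (αB b) (αB b')) :
    IsCycleSet (glueOp opA opB αA αB) ∧
    (IsNondegenerate opA → IsNondegenerate opB →
      IsNondegenerate (glueOp opA opB αA αB)) :=
  ⟨⟨glueOp_bijective αA αB hA.1 hB.1, glueOp_cycle_identity hA.2 hB.2 hαA hαB⟩,
    fun hNA hNB => hNA.glueOp αA αB hNB⟩
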